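/- arXiv:1807.06284 — 4 statements merged into one kernel-verified Lean document; each statement's English description precedes it below -/
import Mathlib

section
/- (First BRAIN theorem, finite form) Let α be an irrational real number and N a positive integer. Then there exists an integer q₀ with 1 ≤ q₀ ≤ N such that round(q₀·α) and q₀ are coprime and for all integers p and q with 1 ≤ q ≤ N, |α - (round (q₀·α))/q₀| ≤ |α - p/q|; that is, the best rational approximation of the first kind of α with denominator at most N is attained by an irreducible fraction of the form round(q₀·α)/q₀. -/
theorem Finset.exists_min_image_of_least {ι β : Type*} [LinearOrder ι] [LinearOrder β]
    (s : Finset ι) (f : ι → β) (hs : s.Nonempty) :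
    ∃ x ∈ s, (∀ y ∈ s, f x ≤ f y) ∧ ∀ y ∈ s, f y ≤ f x → x ≤ y := by
  classical
  obtain ⟨m, hms, hm⟩ := s.exists_min_image f hs
  set T := s.filter fun x => ∀ y ∈ s, f x ≤ f y
  have hT : T.Nonempty := ⟨m, Finset.mem_filter.mpr ⟨hms, hm⟩⟩
  obtain ⟨hxs, hxmin⟩ := Finset.mem_filter.mp (T.min'_mem hT)
  refine ⟨T.min' hT, hxs, hxmin, fun y hys hy => T.min'_le y ?_⟩
  exact Finset.mem_filter.mpr ⟨hys, fun z hz => hy.trans (hxmin z hz)⟩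

theorem abs_sub_round_div_le (x : ℝ) {q : ℤ} (hq : 0 < q) (p : ℤ) :
    |x - (round ((q : ℝ) * x) : ℝ) / q| ≤ |x - (p : ℝ) / q| := by
  have hq' : (0 : ℝ) < q := by exact_mod_cast hq
  have hsub : ∀ r : ℝ, x - r / q = ((q : ℝ) * x - r) / q := fun r => by field_simp
  rw [hsub, hsub, abs_div, abs_div, abs_of_pos hq']
  exact div_le_div_of_nonneg_right (round_le _ p) hq'.le

/-- If `round (q * x) / q` is not in lowest terms, cancelling the common factor gives a smaller
denominator that approximates `x` at least as well. -/
theorem exists_lt_abs_sub_round_div_le_of_not_isCoprime (x : ℝ) {q : ℤ} (hq : 0 < q)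
    (h : ¬ IsCoprime (round ((q : ℝ) * x)) q) :
    ∃ b : ℤ, 0 < b ∧ b < q ∧
      |x - (round ((b : ℝ) * x) : ℝ) / b| ≤ |x - (round ((q : ℝ) * x) : ℝ) / q| := by
  set d : ℤ := (Int.gcd (round ((q : ℝ) * x)) q : ℤ)
  have hd : 2 ≤ d := by
    rw [Int.isCoprime_iff_gcd_eq_one] at h
    have : Int.gcd (round ((q : ℝ) * x)) q ≠ 0 := Int.gcd_ne_zero_right hq.ne'
    omega
  obtain ⟨b, hb⟩ : d ∣ q := Int.gcd_dvd_right _ _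
  obtain ⟨a, ha⟩ : d ∣ round ((q : ℝ) * x) := Int.gcd_dvd_left _ _
  have hb0 : 0 < b := pos_of_mul_pos_right (hb ▸ hq) (by omega)
  have hfrac : (round ((q : ℝ) * x) : ℝ) / q = (a : ℝ) / b := by
    rw [ha, hb]
    push_cast
    exact mul_div_mul_left _ _ (by positivity)
  refine ⟨b, hb0, by nlinarith, ?_⟩
  rw [hfrac]
  exact abs_sub_round_div_le x hb0 a

theorem first_brain_theorem_general (α : ℝ) (N : ℤ) (hN : 1 ≤ N) :
    ∃ q₀ : ℤ, 1 ≤ q₀ ∧ q₀ ≤ N ∧ IsCoprime (round ((q₀ : ℝ) * α)) q₀ ∧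
      ∀ p q : ℤ, 1 ≤ q → q ≤ N →
        |α - (round ((q₀ : ℝ) * α) : ℝ) / (q₀ : ℝ)| ≤ |α - (p : ℝ) / (q : ℝ)| := by
  obtain ⟨q₀, hq₀, hmin, hleast⟩ := (Finset.Icc 1 N).exists_min_image_of_least
    (fun q : ℤ => |α - (round ((q : ℝ) * α) : ℝ) / q|) ⟨1, Finset.mem_Icc.mpr ⟨le_rfl, hN⟩⟩
  obtain ⟨hq₀1, hq₀N⟩ := Finset.mem_Icc.mp hq₀
  refine ⟨q₀, hq₀1, hq₀N, ?_, fun p q hq1 hqN => ?_⟩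
  · by_contra hcop
    obtain ⟨b, hb0, hbq, hb⟩ := exists_lt_abs_sub_round_div_le_of_not_isCoprime α hq₀1 hcop
    have hbS : b ∈ Finset.Icc 1 N := Finset.mem_Icc.mpr ⟨hb0, by omega⟩
    exact absurd (hleast b hbS hb) (not_le.mpr hbq)
  · exact (hmin q (Finset.mem_Icc.mpr ⟨hq1, hqN⟩)).trans (abs_sub_round_div_le α hq1 p)

theorem first_brain_theorem (α : ℝ) (hα : Irrational α) (N : ℤ) (hN : 1 ≤ N) :
    ∃ q₀ : ℤ, 1 ≤ q₀ ∧ q₀ ≤ N ∧ IsCoprime (round ((q₀ : ℝ) * α)) q₀ ∧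
      ∀ p q : ℤ, 1 ≤ q → q ≤ N →
        |α - (round ((q₀ : ℝ) * α) : ℝ) / (q₀ : ℝ)| ≤ |α - (p : ℝ) / (q : ℝ)| :=
  first_brain_theorem_general α N hN
end

section
/- (Second BRAIN theorem, finite form) Let α be an irrational real number and N a positive integer. Then there exists a unique integer q₀ with 1 ≤ q₀ ≤ N such that for every integer q with 1 ≤ q ≤ N, ‖q₀·α‖ ≤ ‖q·α‖. Moreover, round(q₀·α) and q₀ are coprime, and for all integers p and q with 1 ≤ q ≤ N one has |q₀·α - round (q₀·α)| ≤ |q·α - p|. -/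
/-! For irrational `α` the quantities `|q α - p|` with `q ≠ 0` are positive, and two of them can only
coincide when the denominators agree up to sign; hence the minimum of `‖q α‖` over `1 ≤ q ≤ N` is
attained at exactly one `q₀`. With `p₀ = round (q₀ α)` and `g = gcd (p₀, q₀)`, `‖q₀ α‖ = g · |(q₀ / g) α - p₀ / g|`,
so minimality at the divisor `q₀ / g` forces `g = 1`. -/

namespace Irrational

variable {α : ℝ}

lemma eq_zero_of_intCast_mul_eq_intCast (hα : Irrational α) {q p : ℤ}
    (h : (q : ℝ) * α = p) : q = 0 := by
  by_contra hq
  exact (hα.intCast_mul hq).ne_int p h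

lemma abs_intCast_mul_sub_round_pos (hα : Irrational α) {q : ℤ} (hq : q ≠ 0) :
    0 < |(q : ℝ) * α - round ((q : ℝ) * α)| :=
  abs_pos.mpr (sub_ne_zero.mpr ((hα.intCast_mul hq).ne_int _))

lemma eq_or_eq_neg_of_abs_intCast_mul_sub_eq (hα : Irrational α) {q₁ q₂ p₁ p₂ : ℤ}
    (h : |(q₁ : ℝ) * α - p₁| = |(q₂ : ℝ) * α - p₂|) : q₁ = q₂ ∨ q₁ = -q₂ := by
  rcases abs_eq_abs.mp h with h | h
  · have := hα.eq_zero_of_intCast_mul_eq_intCast (q := q₁ - q₂) (p := p₁ - p₂)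
      (by push_cast; linarith)
    omega
  · have := hα.eq_zero_of_intCast_mul_eq_intCast (q := q₁ + q₂) (p := p₁ + p₂)
      (by push_cast; linarith)
    omega

lemma isCoprime_round_intCast_mul (hα : Irrational α) {q₀ : ℤ} (hq₀ : 0 < q₀)
    (hmin : ∀ q : ℤ, 0 < q → q ∣ q₀ →
      |(q₀ : ℝ) * α - round ((q₀ : ℝ) * α)| ≤ |(q : ℝ) * α - round ((q : ℝ) * α)|) :
    IsCoprime (round ((q₀ : ℝ) * α)) q₀ := by
  set p₀ := round ((q₀ : ℝ) * α)
  set g : ℤ := (Int.gcd p₀ q₀ : ℤ) with hg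
  have hg_pos : 0 < g := by
    rw [hg]; exact_mod_cast Int.gcd_pos_of_ne_zero_right _ hq₀.ne'
  obtain ⟨q, hq⟩ : g ∣ q₀ := Int.gcd_dvd_right _ _
  obtain ⟨p, hp⟩ : g ∣ p₀ := Int.gcd_dvd_left _ _
  have hq_pos : 0 < q := pos_of_mul_pos_right (hq ▸ hq₀) hg_pos.le
  have hscale : |(q₀ : ℝ) * α - p₀| = g * |(q : ℝ) * α - p| := by
    rw [hq, hp, ← abs_of_pos (Int.cast_pos.mpr hg_pos), ← abs_mul]
    push_cast; ring_nf
  have hd_pos := hα.abs_intCast_mul_sub_round_pos hq₀.ne'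
  have hd_le : |(q₀ : ℝ) * α - p₀| ≤ |(q : ℝ) * α - p| :=
    (hmin q hq_pos ⟨g, by rw [hq, mul_comm]⟩).trans (round_le _ p)
  have hg_le : (g : ℝ) ≤ 1 := by nlinarith
  have hg_one : g = 1 := le_antisymm (by exact_mod_cast hg_le) hg_pos
  rw [Int.isCoprime_iff_gcd_eq_one]
  rw [hg] at hg_one
  exact_mod_cast hg_one

lemma existsUnique_minimizer_abs_intCast_mul_sub_round (hα : Irrational α) {N : ℤ} (hN : 1 ≤ N) :
    ∃! q₀ : ℤ, 1 ≤ q₀ ∧ q₀ ≤ N ∧ ∀ q : ℤ, 1 ≤ q → q ≤ N →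
      |(q₀ : ℝ) * α - round ((q₀ : ℝ) * α)| ≤ |(q : ℝ) * α - round ((q : ℝ) * α)| := by
  obtain ⟨q₀, hq₀, hmin⟩ := Finset.exists_min_image (Finset.Icc 1 N)
    (fun q : ℤ => |(q : ℝ) * α - round ((q : ℝ) * α)|) ⟨1, Finset.mem_Icc.mpr ⟨le_rfl, hN⟩⟩
  obtain ⟨h1, hN₀⟩ := Finset.mem_Icc.mp hq₀
  refine ⟨q₀, ⟨h1, hN₀, fun q h1 hN => hmin q (Finset.mem_Icc.mpr ⟨h1, hN⟩)⟩, ?_⟩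
  rintro q ⟨hq1, hqN, hqmin⟩
  have := hα.eq_or_eq_neg_of_abs_intCast_mul_sub_eq
    (le_antisymm (hqmin q₀ h1 hN₀) (hmin q (Finset.mem_Icc.mpr ⟨hq1, hqN⟩)))
  omega

end Irrational

theorem second_brain_theorem (α : ℝ) (hα : Irrational α) (N : ℤ) (hN : 1 ≤ N) :
    (∃! q₀ : ℤ, 1 ≤ q₀ ∧ q₀ ≤ N ∧
      ∀ q : ℤ, 1 ≤ q → q ≤ N →
        |(q₀ : ℝ) * α - (round ((q₀ : ℝ) * α) : ℝ)| ≤ |(q : ℝ) * α - (round ((q : ℝ) * α) : ℝ)|) ∧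
    ∀ q₀ : ℤ, (1 ≤ q₀ ∧ q₀ ≤ N ∧
      ∀ q : ℤ, 1 ≤ q → q ≤ N →
        |(q₀ : ℝ) * α - (round ((q₀ : ℝ) * α) : ℝ)| ≤ |(q : ℝ) * α - (round ((q : ℝ) * α) : ℝ)|) →
      IsCoprime (round ((q₀ : ℝ) * α)) q₀ ∧
        ∀ p q : ℤ, 1 ≤ q → q ≤ N →
          |(q₀ : ℝ) * α - (round ((q₀ : ℝ) * α) : ℝ)| ≤ |(q : ℝ) * α - (p : ℝ)| := by
  refine ⟨hα.existsUnique_minimizer_abs_intCast_mul_sub_round hN,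
    fun q₀ ⟨h1, hN₀, hmin⟩ => ⟨?_, fun p q hq hqN => ?_⟩⟩
  · exact hα.isCoprime_round_intCast_mul (by omega) fun q hq hdvd =>
      hmin q hq ((Int.le_of_dvd (by omega) hdvd).trans hN₀)
  · exact (hmin q hq hqN).trans (round_le _ p)
end

section
/- (A best approximation of the second kind is a best approximation of the first kind) Let α be an irrational real number and let r, q be integers with 1 ≤ r < q. If |α - (round (r·α))/r| ≤ |α - (round (q·α))/q|, then ‖r·α‖ < ‖q·α‖. Consequently, if ‖q·α‖ < ‖s·α‖ for all integers s with 1 ≤ s < q, then ‖q·α‖/q < ‖s·α‖/s for all integers s with 1 ≤ s < q. -/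
lemma abs_mul_sub (α : ℝ) (r : ℝ) (hr : 0 < r) (p : ℝ) :
    |r * α - p| = r * |α - p / r| := by
  have h : r * α - p = r * (α - p / r) := by field_simp
  rw [h, abs_mul, abs_of_pos hr]

theorem second_kind_is_first_kind (α : ℝ) (hα : Irrational α) (q : ℤ) (hq : 1 ≤ q) :
    (∀ r : ℤ, 1 ≤ r → r < q →
      |α - (round ((r : ℝ) * α) : ℝ) / (r : ℝ)| ≤ |α - (round ((q : ℝ) * α) : ℝ) / (q : ℝ)| →
        |(r : ℝ) * α - (round ((r : ℝ) * α) : ℝ)| < |(q : ℝ) * α - (round ((q : ℝ) * α) : ℝ)|) ∧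
    ((∀ s : ℤ, 1 ≤ s → s < q →
        |(q : ℝ) * α - (round ((q : ℝ) * α) : ℝ)| < |(s : ℝ) * α - (round ((s : ℝ) * α) : ℝ)|) →
      ∀ s : ℤ, 1 ≤ s → s < q →
        |(q : ℝ) * α - (round ((q : ℝ) * α) : ℝ)| / (q : ℝ) <
          |(s : ℝ) * α - (round ((s : ℝ) * α) : ℝ)| / (s : ℝ)) := by
  have hq0 : (0 : ℝ) < (q : ℝ) := by exact_mod_cast hq.trans_lt' (by norm_num)
  have hBpos : 0 < |α - (round ((q : ℝ) * α) : ℝ) / (q : ℝ)| := by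
    rw [abs_pos, sub_ne_zero]
    intro h
    exact hα ⟨(round ((q : ℝ) * α) : ℚ) / (q : ℚ), by push_cast; exact h.symm⟩
  have part1 : ∀ r : ℤ, 1 ≤ r → r < q →
      |α - (round ((r : ℝ) * α) : ℝ) / (r : ℝ)| ≤ |α - (round ((q : ℝ) * α) : ℝ) / (q : ℝ)| →
        |(r : ℝ) * α - (round ((r : ℝ) * α) : ℝ)| < |(q : ℝ) * α - (round ((q : ℝ) * α) : ℝ)| := by
    intro r hr hrq hle
    have hr0 : (0 : ℝ) < (r : ℝ) := by exact_mod_cast hr.trans_lt' (by norm_num)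
    rw [abs_mul_sub α _ hr0, abs_mul_sub α _ hq0]
    calc (r : ℝ) * |α - (round ((r : ℝ) * α) : ℝ) / (r : ℝ)|
        ≤ (r : ℝ) * |α - (round ((q : ℝ) * α) : ℝ) / (q : ℝ)| := by
          exact mul_le_mul_of_nonneg_left hle hr0.le
      _ < (q : ℝ) * |α - (round ((q : ℝ) * α) : ℝ) / (q : ℝ)| := by
          apply mul_lt_mul_of_pos_right _ hBpos
          exact_mod_cast hrq
  refine ⟨part1, fun h s hs hsq => ?_⟩
  have hs0 : (0 : ℝ) < (s : ℝ) := by exact_mod_cast hs.trans_lt' (by norm_num)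
  have key : |α - (round ((q : ℝ) * α) : ℝ) / (q : ℝ)| < |α - (round ((s : ℝ) * α) : ℝ) / (s : ℝ)| := by
    by_contra hc
    push_neg at hc
    exact absurd (part1 s hs hsq hc) (not_lt.mpr (h s hs hsq).le)
  rw [abs_mul_sub α _ hs0, abs_mul_sub α _ hq0,
    mul_div_cancel_left₀ _ hq0.ne', mul_div_cancel_left₀ _ hs0.ne']
  exact key
end

section
/- (Improved Dirichlet theorem) Let α be an irrational real number. Then there exist infinitely many pairs of integers (p, q) with q ≥ 1 such that |α - p/q| < 1/(2q²); that is, the set of positive integers q for which |q·α - round(q·α)| < 1/(2q) is infinite. -/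
open GenContFract

theorem improved_dirichlet (α : ℝ) (hα : Irrational α) :
    {q : ℤ | 1 ≤ q ∧
      |(q : ℝ) * α - (round ((q : ℝ) * α) : ℝ)| < 1 / (2 * (q : ℝ))}.Infinite := by
  -- non-termination of the continued fraction of α
  have hnt : ∀ n, ¬(GenContFract.of α).TerminatedAt n := by
    intro n h
    have ht : (GenContFract.of α).Terminates := ⟨n, h⟩
    rw [terminates_iff_rat] at ht
    obtain ⟨q, hq⟩ := ht
    exact hα ⟨q, hq.symm⟩
  have hs : ∀ n, ∃ gp, (GenContFract.of α).s.get? n = some gp := fun n =>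
    Option.ne_none_iff_exists'.mp (hnt n)
  have hstream : ∀ n, ∃ ifp, IntFractPair.stream α n = some ifp ∧ ifp.fr ≠ 0 := by
    intro n
    have h1 : IntFractPair.stream α (n + 1) ≠ none := by
      intro h
      exact hnt n ((of_terminatedAt_n_iff_succ_nth_intFractPair_stream_eq_none).mpr h)
    obtain ⟨ifp1, hifp1⟩ := Option.ne_none_iff_exists'.mp h1
    obtain ⟨ifp, hifp, hfr, _⟩ := IntFractPair.succ_nth_stream_eq_some_iff.mp hifp1
    exact ⟨ifp, hifp, hfr⟩
  have hB : ∀ n, (Nat.fib (n + 1) : ℝ) ≤ (GenContFract.of α).dens n := fun n =>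
    succ_nth_fib_le_of_nth_den (Or.inr (hnt _))
  have hBpos : ∀ n, 0 < (GenContFract.of α).dens n := fun n =>
    lt_of_lt_of_le (by exact_mod_cast Nat.fib_pos.mpr n.succ_pos) (hB n)
  -- integrality of the continuants
  have hZ : ∀ n, ∃ x y : ℤ, ((GenContFract.of α).contsAux n).a = (x : ℝ) ∧
      ((GenContFract.of α).contsAux n).b = (y : ℝ) := by
    intro n
    induction n using Nat.strong_induction_on with
    | _ n IH =>
      match n with
      | 0 => exact ⟨1, 0, by simp, by simp⟩
      | 1 => exact ⟨⌊α⌋, 1, by simp [of_h_eq_floor], by simp⟩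
      | (k + 2) =>
        obtain ⟨gp, hgp⟩ := hs k
        obtain ⟨x1, y1, hx1, hy1⟩ := IH k (by omega)
        obtain ⟨x2, y2, hx2, hy2⟩ := IH (k + 1) (by omega)
        obtain ⟨b, hb⟩ := exists_int_eq_of_partDen (partDen_eq_s_b hgp)
        have ha : gp.a = 1 := of_partNum_eq_one (partNum_eq_s_a hgp)
        rw [contsAux_recurrence hgp rfl rfl]
        exact ⟨b * x2 + x1, b * y2 + y1,
          by push_cast [ha, hb, hx1, hx2]; ring,
          by push_cast [ha, hb, hy1, hy2]; ring⟩
  -- strict increase of denominators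
  have hBlt : ∀ m, (GenContFract.of α).dens (m + 1) + 1 ≤ (GenContFract.of α).dens (m + 2) := by
    intro m
    obtain ⟨gp, hgp⟩ := hs (m + 1)
    have ha : gp.a = 1 := of_partNum_eq_one (partNum_eq_s_a hgp)
    have hb : (1 : ℝ) ≤ gp.b := of_one_le_get?_partDen (partDen_eq_s_b hgp)
    have hrec := dens_recurrence hgp rfl rfl
    have h1 : (1 : ℝ) ≤ (GenContFract.of α).dens m := by
      refine le_trans ?_ (hB m)
      exact_mod_cast Nat.one_le_iff_ne_zero.mpr (Nat.fib_pos.mpr m.succ_pos).ne'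
    rw [hrec, ha]
    nlinarith [hBpos (m + 1)]
  -- error formula with sign
  have herr : ∀ n, ∃ d : ℝ, 0 < d ∧ α - (GenContFract.of α).convs n = (-1) ^ n / d := by
    intro n
    obtain ⟨ifp, hifp, hfr⟩ := hstream n
    have h2 := sub_convs_eq hifp
    simp only [hfr, if_false] at h2
    refine ⟨_, ?_, h2⟩
    have hfr0 : 0 < ifp.fr :=
      lt_of_le_of_ne (IntFractPair.nth_stream_fr_nonneg hifp) (Ne.symm hfr)
    have h3 : 0 < ((GenContFract.of α).contsAux (n + 1)).b := hBpos n
    have h4 : 0 ≤ ((GenContFract.of α).contsAux n).b := zero_le_of_contsAux_b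
    positivity
  -- determinant / gap formula
  have hdet : ∀ n, (GenContFract.of α).nums n * (GenContFract.of α).dens (n + 1)
      - (GenContFract.of α).dens n * (GenContFract.of α).nums (n + 1) = (-1) ^ (n + 1) := fun n =>
    SimpContFract.determinant (s := ⟨GenContFract.of α, GenContFract.of_isSimpContFract α⟩) (hnt n)
  have hgap : ∀ n, (GenContFract.of α).convs (n + 1) - (GenContFract.of α).convs n
      = (-1) ^ n / ((GenContFract.of α).dens n * (GenContFract.of α).dens (n + 1)) := by
    intro n
    have h1 := (hBpos n).ne'
    have h2 := (hBpos (n + 1)).ne'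
    have key' : (GenContFract.of α).nums (n + 1) / (GenContFract.of α).dens (n + 1)
        - (GenContFract.of α).nums n / (GenContFract.of α).dens n
        = ((GenContFract.of α).dens n * (GenContFract.of α).nums (n + 1)
            - (GenContFract.of α).nums n * (GenContFract.of α).dens (n + 1))
          / ((GenContFract.of α).dens n * (GenContFract.of α).dens (n + 1)) := by
      field_simp
    rw [conv_eq_num_div_den, conv_eq_num_div_den, key']
    have h3 : (GenContFract.of α).dens n * (GenContFract.of α).nums (n + 1)
        - (GenContFract.of α).nums n * (GenContFract.of α).dens (n + 1) = (-1) ^ n := by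
      have h4 := hdet n
      have h5 : (-1 : ℝ) ^ (n + 1) = -(-1) ^ n := by rw [pow_succ]; ring
      linarith [h4, h5.le, h5.ge]
    rw [h3]
  -- sum of consecutive errors equals the gap
  have hsum : ∀ n, |α - (GenContFract.of α).convs n| + |α - (GenContFract.of α).convs (n + 1)|
      = 1 / ((GenContFract.of α).dens n * (GenContFract.of α).dens (n + 1)) := by
    intro n
    obtain ⟨d1, hd1, he1⟩ := herr n
    obtain ⟨d2, hd2, he2⟩ := herr (n + 1)
    have habs1 : |α - (GenContFract.of α).convs n| = 1 / d1 := by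
      rw [he1, abs_div, abs_neg_one_pow, abs_of_pos hd1]
    have habs2 : |α - (GenContFract.of α).convs (n + 1)| = 1 / d2 := by
      rw [he2, abs_div, abs_neg_one_pow, abs_of_pos hd2]
    have hg : (-1 : ℝ) ^ n / ((GenContFract.of α).dens n * (GenContFract.of α).dens (n + 1))
        = (-1) ^ n / d1 + (-1) ^ n / d2 := by
      rw [← hgap n]
      have : (GenContFract.of α).convs (n + 1) - (GenContFract.of α).convs n
          = (α - (GenContFract.of α).convs n) - (α - (GenContFract.of α).convs (n + 1)) := by ring
      rw [this, he1, he2, pow_succ]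
      ring
    have hg' : (1 : ℝ) / ((GenContFract.of α).dens n * (GenContFract.of α).dens (n + 1)) = 1 / d1 + 1 / d2 := by
      rcases Nat.even_or_odd n with h | h
      · rw [h.neg_one_pow] at hg; simpa using hg
      · rw [h.neg_one_pow] at hg
        simp only [neg_div, one_div] at hg ⊢
        linarith
    rw [habs1, habs2, hg']
  -- key step: one of two consecutive convergents is a good approximation
  have key : ∀ n : ℕ, ∃ m : ℕ, n ≤ m ∧
      |α - (GenContFract.of α).convs m| < 1 / (2 * ((GenContFract.of α).dens m) ^ 2) := by
    intro n
    by_contra hcon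
    push_neg at hcon
    have h1 := hcon (n + 1) (by omega)
    have h2 := hcon (n + 2) (by omega)
    set x := (GenContFract.of α).dens (n + 1) with hx
    set y := (GenContFract.of α).dens (n + 2) with hy
    have hxpos : 0 < x := hBpos (n + 1)
    have hypos : 0 < y := hBpos (n + 2)
    have hxy : x + 1 ≤ y := hBlt n
    have hsum' := hsum (n + 1)
    have h5 : 1 / (2 * x ^ 2) + 1 / (2 * y ^ 2) ≤ 1 / (x * y) := by
      rw [← hsum']
      exact add_le_add h1 h2
    rw [div_add_div _ _ (by positivity) (by positivity),
      div_le_div_iff₀ (by positivity) (by positivity)] at h5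
    have h7 : 0 ≤ (y - x) * (y - x - 1) :=
      mul_nonneg (by linarith) (by linarith)
    have h8 : 1 ≤ (y - x) ^ 2 := by nlinarith [h7]
    have h9 : x * y * 1 ≤ x * y * (y - x) ^ 2 :=
      mul_le_mul_of_nonneg_left h8 (mul_pos hxpos hypos).le
    nlinarith [h5, h9, mul_pos hxpos hypos]
  -- conclusion
  apply Set.infinite_of_forall_exists_gt
  intro z
  set n : ℕ := max 5 (z.toNat + 1) with hn
  obtain ⟨m, hmn, hgood⟩ := key n
  obtain ⟨x, y, hxa, hyb⟩ := hZ (m + 1)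
  have hAm : (GenContFract.of α).nums m = (x : ℝ) := hxa
  have hBm : (GenContFract.of α).dens m = (y : ℝ) := hyb
  have hypos : (0 : ℝ) < y := hBm ▸ hBpos m
  have hy1 : 1 ≤ y := by
    have : (1 : ℝ) ≤ (y : ℝ) := by
      rw [← hBm]
      refine le_trans ?_ (hB m)
      exact_mod_cast Nat.one_le_iff_ne_zero.mpr (Nat.fib_pos.mpr m.succ_pos).ne'
    exact_mod_cast this
  refine ⟨y, ⟨hy1, ?_⟩, ?_⟩
  · -- the approximation property
    have hc : (GenContFract.of α).convs m = (x : ℝ) / (y : ℝ) := by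
      rw [conv_eq_num_div_den, hAm, hBm]
    rw [hc, hBm] at hgood
    have hq : |(y : ℝ) * α - (x : ℝ)| < 1 / (2 * (y : ℝ)) := by
      have h6 : |(y : ℝ) * α - (x : ℝ)| = |(y : ℝ) * (α - (x : ℝ) / (y : ℝ))| := by
        congr 1
        field_simp
      rw [h6, abs_mul, abs_of_pos hypos]
      calc (y : ℝ) * |α - (x : ℝ) / (y : ℝ)| < (y : ℝ) * (1 / (2 * (y : ℝ) ^ 2)) := by
            exact (mul_lt_mul_iff_right₀ hypos).mpr hgood
        _ = 1 / (2 * (y : ℝ)) := by field_simp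
    exact lt_of_le_of_lt (round_le ((y : ℝ) * α) x) hq
  · -- z < y
    have h7 : (Nat.fib n : ℝ) ≤ (y : ℝ) := by
      rw [← hBm]
      exact le_trans (by exact_mod_cast Nat.fib_mono (by omega : n ≤ m + 1)) (hB m)
    have h8 : n ≤ Nat.fib n := Nat.le_fib_self (le_max_left 5 _)
    have h9 : z.toNat + 1 ≤ n := le_max_right 5 _
    have h10 : (z : ℝ) < (y : ℝ) := by
      calc (z : ℝ) ≤ (z.toNat : ℝ) := by exact_mod_cast Int.self_le_toNat z
        _ < (n : ℝ) := by exact_mod_cast h9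
        _ ≤ (Nat.fib n : ℝ) := by exact_mod_cast h8
        _ ≤ (y : ℝ) := h7
    exact_mod_cast h10
end
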